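/- Let X be an oriented graph on n vertices whose Hermitian adjacency matrix H_X has all eigenvalues odd integers. Let H_Y = I_n ⊗ H_C4 + H_X ⊗ J_4. Then exp(−i(π/4)H_Y) = I_n ⊗ P where P is the 4×4 permutation-like matrix with −1 in entries (1,2),(2,3),(3,4),(4,1) and 0 elsewhere. In particular, for each h, perfect state transfer occurs from vertex 4h+1 to vertices 4h+4, 4h+3, 4h+2 at times π/4, π/2, 3π/4 respectively. -/

import Mathlib

set_option maxHeartbeats 1000000

open Matrix Kronecker

/-- The Hermitian adjacency matrix of the oriented 4-cycle. -/
noncomputable def HC4 : Matrix (Fin 4) (Fin 4) ℂ :=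
  !![0, -Complex.I, 0, Complex.I;
     Complex.I, 0, -Complex.I, 0;
     0, Complex.I, 0, -Complex.I;
     -Complex.I, 0, Complex.I, 0]

/-- The 4×4 matrix with `−1` in entries `(1,2), (2,3), (3,4), (4,1)`, `0` elsewhere. -/
noncomputable def Pshift : Matrix (Fin 4) (Fin 4) ℂ :=
  !![0, -1, 0, 0;
     0, 0, -1, 0;
     0, 0, 0, -1;
     -1, 0, 0, 0]

/-- Perfect state transfer in `H` from `a` to `b` at time `t`. -/
def PST {V : Type} [Fintype V] [DecidableEq V] (H : Matrix V V ℂ) (a b : V) (t : ℝ) : Prop :=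
  ∃ α : ℂ, ‖α‖ = 1 ∧
    (NormedSpace.exp ((-(Complex.I * t)) • H)) *ᵥ (Pi.single a 1 : V → ℂ)
      = α • (Pi.single b 1 : V → ℂ)

/-! ### Auxiliary 4×4 matrix computations -/

noncomputable def Jmat : Matrix (Fin 4) (Fin 4) ℂ := Matrix.of fun _ _ => (1 : ℂ)

noncomputable def Fmat : Matrix (Fin 4) (Fin 4) ℂ :=
  !![1, 1, 1, 1;
     1, Complex.I, -1, -Complex.I;
     1, -1, 1, -1;
     1, -Complex.I, -1, Complex.I]

noncomputable def Fintv : Matrix (Fin 4) (Fin 4) ℂ :=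
  (4⁻¹ : ℂ) • !![1, 1, 1, 1;
     1, -Complex.I, -1, Complex.I;
     1, -1, 1, -1;
     1, Complex.I, -1, -Complex.I]

lemma diag_eq (a b c d : ℂ) : Matrix.diagonal ![a,b,c,d] =
    !![a,0,0,0; 0,b,0,0; 0,0,c,0; 0,0,0,d] := by
  ext i j; fin_cases i <;> fin_cases j <;> simp [Matrix.diagonal] <;> rfl

lemma FFinv : Fmat * Fintv = 1 := by
  ext i j
  fin_cases i <;> fin_cases j <;>
    simp [Fmat, Fintv, Matrix.mul_apply, Fin.sum_univ_four, Matrix.vecHead, Matrix.vecTail,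
      Complex.ext_iff] <;> ring_nf <;>
    simp [Complex.I_sq] <;> ring_nf

lemma FinvF : Fintv * Fmat = 1 := by
  ext i j
  fin_cases i <;> fin_cases j <;>
    simp [Fmat, Fintv, Matrix.mul_apply, Fin.sum_univ_four, Matrix.vecHead, Matrix.vecTail,
      Complex.ext_iff] <;> ring_nf <;>
    simp [Complex.I_sq] <;> ring_nf

lemma Jmul : Jmat * Jmat = (4:ℂ) • Jmat := by
  ext i j; simp [Jmat, Matrix.mul_apply, Fin.sum_univ_four, Matrix.vecHead, Matrix.vecTail]

lemma one4 : (1 : Matrix (Fin 4) (Fin 4) ℂ) = !![1,0,0,0; 0,1,0,0; 0,0,1,0; 0,0,0,1] := by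
  ext i j; fin_cases i <;> fin_cases j <;>
    simp [Matrix.one_apply, Matrix.vecHead, Matrix.vecTail]

lemma HC4J : HC4 * Jmat = 0 := by
  ext i j; fin_cases i <;>
    simp [HC4, Jmat, Matrix.mul_apply, Fin.sum_univ_four, Matrix.vecHead, Matrix.vecTail]

lemma JHC4 : Jmat * HC4 = 0 := by
  ext i j; fin_cases j <;>
    simp [HC4, Jmat, Matrix.mul_apply, Fin.sum_univ_four, Matrix.vecHead, Matrix.vecTail] <;> ring

lemma HC4_eq : HC4 = Fmat * Matrix.diagonal ![0, 2, 0, -2] * Fintv := by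
  rw [diag_eq]
  ext i j
  fin_cases i <;> fin_cases j <;>
    simp [Fmat, Fintv, HC4, Matrix.mul_apply, Fin.sum_univ_four, Matrix.vecHead, Matrix.vecTail,
      Complex.ext_iff] <;>
    ring_nf <;> simp [Complex.I_sq] <;> ring_nf

lemma Ecomp : Fmat * Matrix.diagonal ![1, -Complex.I, 1, Complex.I] * Fintv
    = Pshift + (2⁻¹ : ℂ) • Jmat := by
  rw [diag_eq]
  ext i j
  fin_cases i <;> fin_cases j <;>
    simp [Fmat, Fintv, Pshift, Jmat, Matrix.mul_apply, Fin.sum_univ_four, Matrix.vecHead,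
      Matrix.vecTail, Complex.ext_iff] <;>
    ring_nf <;> simp [Complex.I_sq] <;> ring_nf

lemma final4 : (Pshift + (2⁻¹ : ℂ) • Jmat) * (1 - (2⁻¹ : ℂ) • Jmat) = Pshift := by
  rw [one4]
  ext i j
  fin_cases i <;> fin_cases j <;>
    simp [Pshift, Jmat, Matrix.mul_apply, Fin.sum_univ_four, Matrix.vecHead, Matrix.vecTail] <;>
    norm_num

/-! ### Analytic lemmas -/

section AnalyticLemmas

variable {ι : Type} [Fintype ι] [DecidableEq ι]

/-- `B ↦ 1 ⊗ₖ B` as an algebra hom. -/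
noncomputable def kronLift (ι : Type) [Fintype ι] [DecidableEq ι] :
    Matrix (Fin 4) (Fin 4) ℂ →ₐ[ℂ] Matrix (ι × Fin 4) (ι × Fin 4) ℂ where
  toFun B := (1 : Matrix ι ι ℂ) ⊗ₖ B
  map_one' := Matrix.one_kronecker_one
  map_mul' B C := by rw [← Matrix.mul_kronecker_mul, one_mul]
  map_zero' := Matrix.kronecker_zero _
  map_add' B C := Matrix.kronecker_add _ _ _
  commutes' c := by
    simp only [Algebra.algebraMap_eq_smul_one, Matrix.kronecker_smul, Matrix.one_kronecker_one]

lemma exp_one_kron (B : Matrix (Fin 4) (Fin 4) ℂ) :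
    NormedSpace.exp ((1 : Matrix ι ι ℂ) ⊗ₖ B) = (1 : Matrix ι ι ℂ) ⊗ₖ NormedSpace.exp B := by
  letI : SeminormedRing (Matrix (Fin 4) (Fin 4) ℂ) := Matrix.linftyOpSemiNormedRing
  letI : NormedRing (Matrix (Fin 4) (Fin 4) ℂ) := Matrix.linftyOpNormedRing
  letI : NormedAlgebra ℂ (Matrix (Fin 4) (Fin 4) ℂ) := Matrix.linftyOpNormedAlgebra
  letI : SeminormedRing (Matrix (ι × Fin 4) (ι × Fin 4) ℂ) := Matrix.linftyOpSemiNormedRing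
  letI : NormedRing (Matrix (ι × Fin 4) (ι × Fin 4) ℂ) := Matrix.linftyOpNormedRing
  letI : NormedAlgebra ℂ (Matrix (ι × Fin 4) (ι × Fin 4) ℂ) := Matrix.linftyOpNormedAlgebra
  letI : NormedAlgebra ℚ (Matrix (Fin 4) (Fin 4) ℂ) := Matrix.linftyOpNormedAlgebra
  letI : NormedAlgebra ℚ (Matrix (ι × Fin 4) (ι × Fin 4) ℂ) := Matrix.linftyOpNormedAlgebra
  have hcont : Continuous (kronLift ι) :=
    LinearMap.continuous_of_finiteDimensional (kronLift ι).toLinearMap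
  exact (NormedSpace.map_exp (kronLift ι) hcont B).symm

/-- `B ↦ 4⁻¹ • (B ⊗ₖ Jmat)` as a linear map. -/
noncomputable def kronJ (ι : Type) [Fintype ι] [DecidableEq ι] :
    Matrix ι ι ℂ →ₗ[ℂ] Matrix (ι × Fin 4) (ι × Fin 4) ℂ where
  toFun B := (4⁻¹ : ℂ) • (B ⊗ₖ Jmat)
  map_add' B C := by simp [Matrix.add_kronecker, smul_add]
  map_smul' c B := by
    rw [Matrix.smul_kronecker, smul_comm]
    rfl

lemma exp_kron_J (A : Matrix ι ι ℂ) (c : ℂ) :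
    NormedSpace.exp (c • (A ⊗ₖ Jmat))
      = 1 + (4⁻¹ : ℂ) • ((NormedSpace.exp ((4 * c) • A) - 1) ⊗ₖ Jmat) := by
  letI : SeminormedRing (Matrix ι ι ℂ) := Matrix.linftyOpSemiNormedRing
  letI : NormedRing (Matrix ι ι ℂ) := Matrix.linftyOpNormedRing
  letI : NormedAlgebra ℂ (Matrix ι ι ℂ) := Matrix.linftyOpNormedAlgebra
  letI : SeminormedRing (Matrix (ι × Fin 4) (ι × Fin 4) ℂ) := Matrix.linftyOpSemiNormedRing
  letI : NormedRing (Matrix (ι × Fin 4) (ι × Fin 4) ℂ) := Matrix.linftyOpNormedRing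
  letI : NormedAlgebra ℂ (Matrix (ι × Fin 4) (ι × Fin 4) ℂ) := Matrix.linftyOpNormedAlgebra
  have hpow : ∀ k : ℕ, (c • (A ⊗ₖ Jmat)) ^ (k + 1)
      = ((4 : ℂ) ^ k * c ^ (k + 1)) • ((A ^ (k + 1)) ⊗ₖ Jmat) := by
    intro k
    induction k with
    | zero => simp
    | succ k ih =>
      rw [pow_succ, ih, smul_mul_assoc, mul_smul_comm, ← Matrix.mul_kronecker_mul,
        Jmul, Matrix.kronecker_smul, ← pow_succ]
      match_scalars
      ring
  have hs1 : Summable fun k : ℕ => ((Nat.factorial k : ℂ)⁻¹) • (c • (A ⊗ₖ Jmat)) ^ k :=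
    NormedSpace.expSeries_summable' _
  have hs2 : Summable fun k : ℕ => ((Nat.factorial k : ℂ)⁻¹) • ((4 * c) • A) ^ k :=
    NormedSpace.expSeries_summable' _
  have hs2' : Summable fun k : ℕ => ((Nat.factorial (k+1) : ℂ)⁻¹) • ((4 * c) • A) ^ (k+1) :=
    (summable_nat_add_iff 1).mpr hs2
  have hRHS : (4⁻¹ : ℂ) • ((NormedSpace.exp ((4 * c) • A) - 1) ⊗ₖ Jmat)
      = ∑' k : ℕ, (4⁻¹ : ℂ) • ((((Nat.factorial (k+1) : ℂ)⁻¹) • ((4 * c) • A) ^ (k+1)) ⊗ₖ Jmat) := by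
    have hexp : NormedSpace.exp ((4 * c) • A) - 1
        = ∑' k : ℕ, ((Nat.factorial (k+1) : ℂ)⁻¹) • ((4 * c) • A) ^ (k+1) := by
      rw [NormedSpace.exp_eq_tsum ℂ]
      beta_reduce
      rw [Summable.tsum_eq_zero_add hs2]
      simp
    rw [hexp]
    have h := ContinuousLinearMap.map_tsum (LinearMap.toContinuousLinearMap (kronJ ι)) hs2'
    simpa only [LinearMap.coe_toContinuousLinearMap', kronJ, LinearMap.coe_mk,
      AddHom.coe_mk] using h
  rw [NormedSpace.exp_eq_tsum ℂ]
  beta_reduce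
  rw [Summable.tsum_eq_zero_add hs1, hRHS]
  congr 1
  · simp
  refine tsum_congr fun k => ?_
  rw [hpow]
  rw [smul_pow, Matrix.smul_kronecker, Matrix.smul_kronecker]
  match_scalars
  ring

end AnalyticLemmas

/-- exp of a unitary conjugate of a diagonal matrix whose entries all exponentiate to -1. -/
lemma exp_unit_conj_diag {n : ℕ} (U : Matrix (Fin n) (Fin n) ℂ) (d : Fin n → ℂ)
    (hU1 : U * star U = 1) (hU2 : star U * U = 1)
    (hd : ∀ r, Complex.exp (d r) = -1) :
    NormedSpace.exp (U * Matrix.diagonal d * star U) = -1 := by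
  letI : SeminormedRing (Matrix (Fin n) (Fin n) ℂ) := Matrix.linftyOpSemiNormedRing
  letI : NormedRing (Matrix (Fin n) (Fin n) ℂ) := Matrix.linftyOpNormedRing
  letI : NormedAlgebra ℂ (Matrix (Fin n) (Fin n) ℂ) := Matrix.linftyOpNormedAlgebra
  have key : NormedSpace.exp (U * Matrix.diagonal d * star U)
      = U * NormedSpace.exp (Matrix.diagonal d) * star U :=
    Matrix.exp_units_conj (⟨U, star U, hU1, hU2⟩ : (Matrix (Fin n) (Fin n) ℂ)ˣ) _
  rw [key, Matrix.exp_diagonal]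
  have h2 : NormedSpace.exp d = fun _ => (-1 : ℂ) := by
    rw [Pi.exp_def]
    funext r
    rw [← Complex.exp_eq_exp_ℂ]
    exact hd r
  rw [h2]
  have h3 : Matrix.diagonal (fun _ : Fin n => (-1 : ℂ)) = -1 := by
    rw [← Matrix.diagonal_one, ← Matrix.diagonal_neg]
  rw [h3, mul_neg, mul_one, neg_mul, hU1]

/-- exp of `t • HX` for Hermitian `HX` with all-odd eigenvalues at `t = -π i` is `-1`. -/
lemma exp_neg_pi_I_smul {n : ℕ} (HX : Matrix (Fin n) (Fin n) ℂ) (hH : HX.IsHermitian)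
    (hodd : ∀ r, ∃ k : ℤ, Odd k ∧ hH.eigenvalues r = k) :
    NormedSpace.exp ((-(Complex.I * (Real.pi : ℂ))) • HX) = -1 := by
  have hU1 : (hH.eigenvectorUnitary : Matrix (Fin n) (Fin n) ℂ)
      * star (hH.eigenvectorUnitary : Matrix (Fin n) (Fin n) ℂ) = 1 :=
    (Matrix.mem_unitaryGroup_iff).mp hH.eigenvectorUnitary.2
  have hU2 : star (hH.eigenvectorUnitary : Matrix (Fin n) (Fin n) ℂ)
      * (hH.eigenvectorUnitary : Matrix (Fin n) (Fin n) ℂ) = 1 :=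
    (Matrix.mem_unitaryGroup_iff').mp hH.eigenvectorUnitary.2
  have h1 : (-(Complex.I * (Real.pi : ℂ))) • HX
      = (hH.eigenvectorUnitary : Matrix (Fin n) (Fin n) ℂ)
        * Matrix.diagonal (fun r => -(Complex.I * (Real.pi : ℂ)) * (hH.eigenvalues r : ℂ))
        * star (hH.eigenvectorUnitary : Matrix (Fin n) (Fin n) ℂ) := by
    conv_lhs => rw [hH.spectral_theorem, Unitary.conjStarAlgAut_apply]
    rw [← Matrix.smul_mul, ← Matrix.mul_smul, ← Matrix.diagonal_smul]
    congr 2 <;> try (funext r; simp [Function.comp, smul_eq_mul])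
  rw [h1]
  refine exp_unit_conj_diag _ _ hU1 hU2 fun r => ?_
  obtain ⟨k, hk, hkr⟩ := hodd r
  rw [hkr]
  push_cast
  have h4 : -(Complex.I * (Real.pi : ℂ)) * (k : ℂ) = (k : ℤ) * -((Real.pi : ℂ) * Complex.I) := by
    push_cast
    ring
  rw [h4, Complex.exp_int_mul, Complex.exp_neg, Complex.exp_pi_mul_I, inv_neg, inv_one,
    hk.neg_one_zpow]

/-- The 4×4 exponential. -/
lemma expHC4 : NormedSpace.exp ((-(Complex.I * ((Real.pi : ℂ) / 4))) • HC4)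
    = Pshift + (2⁻¹ : ℂ) • Jmat := by
  letI : SeminormedRing (Matrix (Fin 4) (Fin 4) ℂ) := Matrix.linftyOpSemiNormedRing
  letI : NormedRing (Matrix (Fin 4) (Fin 4) ℂ) := Matrix.linftyOpNormedRing
  letI : NormedAlgebra ℂ (Matrix (Fin 4) (Fin 4) ℂ) := Matrix.linftyOpNormedAlgebra
  set c : ℂ := -(Complex.I * ((Real.pi : ℂ) / 4)) with hc
  have h1 : c • HC4 = Fmat * Matrix.diagonal (fun i => c * (![0, 2, 0, -2] i)) * Fintv := by
    rw [HC4_eq, ← Matrix.smul_mul, ← Matrix.mul_smul, ← Matrix.diagonal_smul]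
    congr 2 <;> try (funext i; simp [smul_eq_mul])
  have key : NormedSpace.exp (Fmat * Matrix.diagonal (fun i => c * (![0, 2, 0, -2] i)) * Fintv)
      = Fmat * NormedSpace.exp (Matrix.diagonal (fun i => c * (![0, 2, 0, -2] i))) * Fintv :=
    Matrix.exp_units_conj (⟨Fmat, Fintv, FFinv, FinvF⟩ : (Matrix (Fin 4) (Fin 4) ℂ)ˣ) _
  rw [h1, key, Matrix.exp_diagonal]
  have h2 : NormedSpace.exp (fun i => c * (![0, 2, 0, -2] i))
      = ![1, -Complex.I, 1, Complex.I] := by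
    rw [Pi.exp_def]
    funext i
    rw [← Complex.exp_eq_exp_ℂ]
    fin_cases i
    · norm_num
    · show Complex.exp (c * 2) = -Complex.I
      rw [show c * 2 = ((-(Real.pi / 2) : ℝ) : ℂ) * Complex.I by rw [hc]; push_cast; ring,
        Complex.exp_mul_I, ← Complex.ofReal_cos, ← Complex.ofReal_sin]
      rw [Real.cos_neg, Real.sin_neg, Real.cos_pi_div_two, Real.sin_pi_div_two]
      simp
    · norm_num
    · show Complex.exp (c * (-2)) = Complex.I
      rw [show c * (-2) = (((Real.pi / 2) : ℝ) : ℂ) * Complex.I by rw [hc]; push_cast; ring,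
        Complex.exp_mul_I, ← Complex.ofReal_cos, ← Complex.ofReal_sin]
      rw [Real.cos_pi_div_two, Real.sin_pi_div_two]
      simp
  have h2' : (Matrix.diagonal (NormedSpace.exp fun i => c * (![0, 2, 0, -2] i)))
      = Matrix.diagonal ![1, -Complex.I, 1, Complex.I] := by rw [h2]
  rw [h2', Ecomp]

/-- The central computation: the exponential of the big matrix. -/
lemma exp_HY {n : ℕ} (HX : Matrix (Fin n) (Fin n) ℂ) (hH : HX.IsHermitian)
    (hodd : ∀ r, ∃ k : ℤ, Odd k ∧ hH.eigenvalues r = k)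
    (HY : Matrix (Fin n × Fin 4) (Fin n × Fin 4) ℂ)
    (hHY : HY = (1 : Matrix (Fin n) (Fin n) ℂ) ⊗ₖ HC4 + HX ⊗ₖ Jmat) :
    NormedSpace.exp ((-(Complex.I * ((Real.pi : ℂ) / 4))) • HY)
      = (1 : Matrix (Fin n) (Fin n) ℂ) ⊗ₖ Pshift := by
  letI : SeminormedRing (Matrix (Fin n × Fin 4) (Fin n × Fin 4) ℂ) :=
    Matrix.linftyOpSemiNormedRing
  letI : NormedRing (Matrix (Fin n × Fin 4) (Fin n × Fin 4) ℂ) := Matrix.linftyOpNormedRing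
  letI : NormedAlgebra ℂ (Matrix (Fin n × Fin 4) (Fin n × Fin 4) ℂ) :=
    Matrix.linftyOpNormedAlgebra
  set c : ℂ := -(Complex.I * ((Real.pi : ℂ) / 4)) with hc
  have h0 : ((1 : Matrix (Fin n) (Fin n) ℂ) ⊗ₖ HC4) * (HX ⊗ₖ Jmat) = 0 := by
    rw [← Matrix.mul_kronecker_mul, HC4J, Matrix.kronecker_zero]
  have h0' : (HX ⊗ₖ Jmat) * ((1 : Matrix (Fin n) (Fin n) ℂ) ⊗ₖ HC4) = 0 := by
    rw [← Matrix.mul_kronecker_mul, JHC4, Matrix.kronecker_zero]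
  have hcomm : Commute (c • ((1 : Matrix (Fin n) (Fin n) ℂ) ⊗ₖ HC4)) (c • (HX ⊗ₖ Jmat)) := by
    have : Commute ((1 : Matrix (Fin n) (Fin n) ℂ) ⊗ₖ HC4) (HX ⊗ₖ Jmat) := by
      unfold Commute SemiconjBy
      rw [h0, h0']
    exact (this.smul_left c).smul_right c
  rw [hHY, smul_add, Matrix.exp_add_of_commute _ _ hcomm]
  have hfact1 : NormedSpace.exp (c • ((1 : Matrix (Fin n) (Fin n) ℂ) ⊗ₖ HC4))
      = (1 : Matrix (Fin n) (Fin n) ℂ) ⊗ₖ (Pshift + (2⁻¹ : ℂ) • Jmat) := by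
    rw [← Matrix.kronecker_smul, exp_one_kron, expHC4]
  have hfact2 : NormedSpace.exp (c • (HX ⊗ₖ Jmat))
      = (1 : Matrix (Fin n) (Fin n) ℂ) ⊗ₖ ((1 : Matrix (Fin 4) (Fin 4) ℂ) - (2⁻¹ : ℂ) • Jmat) := by
    rw [exp_kron_J]
    have h4c : (4 : ℂ) * c = -(Complex.I * (Real.pi : ℂ)) := by rw [hc]; push_cast; ring
    rw [h4c, exp_neg_pi_I_smul HX hH hodd]
    have hneg2 : (-1 : Matrix (Fin n) (Fin n) ℂ) - 1 = (-2 : ℂ) • 1 := by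
      rw [neg_smul, ← Nat.cast_ofNat, Nat.cast_smul_eq_nsmul, two_smul]
      abel
    have hsub : (1 : Matrix (Fin 4) (Fin 4) ℂ) - (2⁻¹ : ℂ) • Jmat
        = 1 + (-(2⁻¹) : ℂ) • Jmat := by
      rw [neg_smul, ← sub_eq_add_neg]
    rw [hneg2, Matrix.smul_kronecker, hsub, Matrix.kronecker_add, Matrix.kronecker_smul,
      Matrix.one_kronecker_one, smul_smul]
    norm_num
  rw [hfact1, hfact2, ← Matrix.mul_kronecker_mul, one_mul, final4]

/-- Action of `1 ⊗ₖ Q` on a standard basis vector. -/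
lemma kron_mulVec_single {n : ℕ} (Q : Matrix (Fin 4) (Fin 4) ℂ) (h : Fin n) (a b : Fin 4)
    (α : ℂ) (hQ : ∀ j, Q j a = α * (if j = b then 1 else 0)) :
    ((1 : Matrix (Fin n) (Fin n) ℂ) ⊗ₖ Q) *ᵥ (Pi.single (h, a) 1 : Fin n × Fin 4 → ℂ)
      = α • (Pi.single (h, b) 1 : Fin n × Fin 4 → ℂ) := by
  rw [Matrix.mulVec_single]
  funext p
  obtain ⟨i, j⟩ := p
  simp only [Matrix.kroneckerMap_apply, Matrix.one_apply, Pi.smul_apply, Pi.single_apply,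
    Prod.mk.injEq, smul_eq_mul, mul_one, hQ j]
  by_cases hi : i = h <;> by_cases hj : j = b <;> simp [hi, hj, hQ]

/-- If `X` is an oriented graph whose Hermitian adjacency matrix `H_X` has all odd
integer eigenvalues, then with `H_Y = I_n ⊗ H_C4 + H_X ⊗ J_4` we have
`exp(−i(π/4) H_Y) = I_n ⊗ P`, and in each block the vertex `4h+1` has perfect state
transfer to `4h+4, 4h+3, 4h+2` at times `π/4, π/2, 3π/4` respectively. -/
theorem stmt7 {n : ℕ} (HX : Matrix (Fin n) (Fin n) ℂ) (hH : HX.IsHermitian)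
    (hor : (∀ a, HX a a = 0) ∧
      ∀ a b, HX a b = 0 ∨ HX a b = Complex.I ∨ HX a b = -Complex.I)
    (hodd : ∀ r, ∃ k : ℤ, Odd k ∧ hH.eigenvalues r = k)
    (HY : Matrix (Fin n × Fin 4) (Fin n × Fin 4) ℂ)
    (hHY : HY = (1 : Matrix (Fin n) (Fin n) ℂ) ⊗ₖ HC4
        + HX ⊗ₖ (Matrix.of fun _ _ => (1 : ℂ) : Matrix (Fin 4) (Fin 4) ℂ)) :
    NormedSpace.exp ((-(Complex.I * (Real.pi / 4))) • HY)
        = (1 : Matrix (Fin n) (Fin n) ℂ) ⊗ₖ Pshift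
      ∧ ∀ h : Fin n,
        PST HY (h, 0) (h, 3) (Real.pi / 4) ∧
        PST HY (h, 0) (h, 2) (Real.pi / 2) ∧
        PST HY (h, 0) (h, 1) (3 * Real.pi / 4) := by
  letI : SeminormedRing (Matrix (Fin n × Fin 4) (Fin n × Fin 4) ℂ) :=
    Matrix.linftyOpSemiNormedRing
  letI : NormedRing (Matrix (Fin n × Fin 4) (Fin n × Fin 4) ℂ) := Matrix.linftyOpNormedRing
  letI : NormedAlgebra ℂ (Matrix (Fin n × Fin 4) (Fin n × Fin 4) ℂ) :=
    Matrix.linftyOpNormedAlgebra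
  have hHY' : HY = (1 : Matrix (Fin n) (Fin n) ℂ) ⊗ₖ HC4 + HX ⊗ₖ Jmat := hHY
  have hG := exp_HY HX hH hodd HY hHY'
  have hscal : (-(Complex.I * ((Real.pi : ℝ) / 4 : ℂ))) = -(Complex.I * ((Real.pi : ℂ) / 4)) := by
    push_cast; ring
  constructor
  · rw [show (-(Complex.I * (Real.pi / 4)) : ℂ) = -(Complex.I * ((Real.pi : ℂ) / 4)) by
      push_cast; ring]
    exact hG
  intro h
  -- the three time steps
  have e1 : NormedSpace.exp ((-(Complex.I * ((Real.pi / 4 : ℝ) : ℂ))) • HY)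
      = (1 : Matrix (Fin n) (Fin n) ℂ) ⊗ₖ Pshift := by
    rw [show (-(Complex.I * ((Real.pi / 4 : ℝ) : ℂ))) = -(Complex.I * ((Real.pi : ℂ) / 4)) by
      push_cast; ring]
    exact hG
  have hcomm : ∀ x y : ℂ, Commute (x • HY) (y • HY) :=
    fun x y => ((Commute.refl HY).smul_left x).smul_right y
  have e2 : NormedSpace.exp ((-(Complex.I * ((Real.pi / 2 : ℝ) : ℂ))) • HY)
      = (1 : Matrix (Fin n) (Fin n) ℂ) ⊗ₖ (Pshift * Pshift) := by
    have hsum : (-(Complex.I * ((Real.pi / 2 : ℝ) : ℂ))) • HY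
        = (-(Complex.I * ((Real.pi : ℂ) / 4))) • HY + (-(Complex.I * ((Real.pi : ℂ) / 4))) • HY := by
      rw [← add_smul]
      congr 1
      push_cast; ring
    rw [hsum, Matrix.exp_add_of_commute _ _ (hcomm _ _), hG, ← Matrix.mul_kronecker_mul, one_mul]
  have e3 : NormedSpace.exp ((-(Complex.I * ((3 * Real.pi / 4 : ℝ) : ℂ))) • HY)
      = (1 : Matrix (Fin n) (Fin n) ℂ) ⊗ₖ (Pshift * Pshift * Pshift) := by
    have hsum : (-(Complex.I * ((3 * Real.pi / 4 : ℝ) : ℂ))) • HY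
        = ((-(Complex.I * ((Real.pi : ℂ) / 4))) • HY + (-(Complex.I * ((Real.pi : ℂ) / 4))) • HY)
          + (-(Complex.I * ((Real.pi : ℂ) / 4))) • HY := by
      rw [← add_smul, ← add_smul]
      congr 1
      push_cast; ring
    have hc2 : Commute ((-(Complex.I * ((Real.pi : ℂ) / 4))) • HY
          + (-(Complex.I * ((Real.pi : ℂ) / 4))) • HY)
        ((-(Complex.I * ((Real.pi : ℂ) / 4))) • HY) := (hcomm _ _).add_left (hcomm _ _)
    rw [hsum, Matrix.exp_add_of_commute _ _ hc2, Matrix.exp_add_of_commute _ _ (hcomm _ _), hG,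
      ← Matrix.mul_kronecker_mul, one_mul, ← Matrix.mul_kronecker_mul, one_mul]
  refine ⟨⟨-1, by simp, ?_⟩, ⟨1, by simp, ?_⟩, ⟨-1, by simp, ?_⟩⟩
  · rw [e1]
    refine kron_mulVec_single _ h 0 3 (-1) fun j => ?_
    fin_cases j <;> simp [Pshift]
  · rw [e2]
    refine kron_mulVec_single _ h 0 2 1 fun j => ?_
    fin_cases j <;>
      simp [Pshift, Matrix.mul_apply, Fin.sum_univ_four, Matrix.vecHead, Matrix.vecTail]
  · rw [e3]
    refine kron_mulVec_single _ h 0 1 (-1) fun j => ?_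
    fin_cases j <;>
      simp [Pshift, Matrix.mul_apply, Fin.sum_univ_four, Matrix.vecHead, Matrix.vecTail]
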